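/- For every rational point P ∈ C(ℚ) on the Pell conic, the sequence 2^{−n}·h₀(2ⁿP) is a Cauchy sequence, so the canonical height h(P) = lim_{n→∞} 2^{−n}·h₀(2ⁿP) exists; moreover |h(P) − h₀(P)| ≤ log 4 for all P ∈ C(ℚ). -/

import Mathlib

open Filter Real

/-- The defining equation of the Pell conic `X² - ΔY² = 4`. -/
def PellSol (Δ : ℚ) (P : ℚ × ℚ) : Prop := P.1 ^ 2 - Δ * P.2 ^ 2 = 4

/-- The rational points on the Pell conic `X² - ΔY² = 4`. -/
def Conic (Δ : ℚ) : Type := {P : ℚ × ℚ // PellSol Δ P}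

namespace Conic

variable {Δ : ℚ}

/-- Addition on the Pell conic. -/
instance : Add (Conic Δ) :=
  ⟨fun P Q => ⟨((P.val.1 * Q.val.1 + Δ * P.val.2 * Q.val.2) / 2,
    (P.val.1 * Q.val.2 + P.val.2 * Q.val.1) / 2), by
      have hP := P.property
      have hQ := Q.property
      unfold PellSol at *
      dsimp only
      linear_combination ((Q.val.1 ^ 2 - Δ * Q.val.2 ^ 2) / 4) * hP + hQ⟩⟩

/-- The neutral element `(2,0)` of the Pell conic. -/
instance : Zero (Conic Δ) := ⟨⟨(2, 0), by unfold PellSol; norm_num⟩⟩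

/-- The negative of a point on the Pell conic. -/
instance : Neg (Conic Δ) :=
  ⟨fun P => ⟨(P.val.1, -P.val.2), by
    have hP := P.property
    unfold PellSol at *
    dsimp only
    linear_combination hP⟩⟩

@[simp] lemma add_val (P Q : Conic Δ) :
    (P + Q).val = ((P.val.1 * Q.val.1 + Δ * P.val.2 * Q.val.2) / 2,
      (P.val.1 * Q.val.2 + P.val.2 * Q.val.1) / 2) := rfl

@[simp] lemma zero_val : ((0 : Conic Δ)).val = (2, 0) := rfl

@[simp] lemma neg_val (P : Conic Δ) : (-P).val = (P.val.1, -P.val.2) := rfl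

protected lemma add_assoc' (P Q R : Conic Δ) : P + Q + R = P + (Q + R) := by
  apply Subtype.ext
  rw [Prod.ext_iff, add_val, add_val, add_val, add_val]
  constructor <;> (dsimp only; ring)

protected lemma zero_add' (P : Conic Δ) : 0 + P = P := by
  apply Subtype.ext
  rw [Prod.ext_iff, add_val, zero_val]
  constructor <;> (dsimp only; ring)

protected lemma add_zero' (P : Conic Δ) : P + 0 = P := by
  apply Subtype.ext
  rw [Prod.ext_iff, add_val, zero_val]
  constructor <;> (dsimp only; ring)

protected lemma neg_add_cancel' (P : Conic Δ) : -P + P = 0 := by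
  have hP := P.property
  unfold PellSol at hP
  apply Subtype.ext
  rw [Prod.ext_iff, add_val, neg_val, zero_val]
  constructor
  · dsimp only
    linear_combination hP / 2
  · dsimp only; ring

protected lemma add_comm' (P Q : Conic Δ) : P + Q = Q + P := by
  apply Subtype.ext
  rw [Prod.ext_iff, add_val, add_val]
  constructor <;> (dsimp only; ring)

/-- The group structure on the rational points of the Pell conic. -/
instance : AddCommGroup (Conic Δ) where
  add := (· + ·)
  zero := 0
  neg := Neg.neg
  nsmul := nsmulRec
  zsmul := zsmulRec
  add_assoc := Conic.add_assoc'
  zero_add := Conic.zero_add'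
  add_zero := Conic.add_zero'
  neg_add_cancel := Conic.neg_add_cancel'
  add_comm := Conic.add_comm'

end Conic
section Extra

namespace Conic

variable {Δ : ℚ}

/-- The naive height of a point on a Pell conic: `H(x,y) = max(|num x|, den x)`. -/
noncomputable def height (P : Conic Δ) : ℝ :=
  max (|P.val.1.num| : ℝ) (P.val.1.den : ℝ)

/-- The logarithmic height `h₀(P) = log H(P)`. -/
noncomputable def logHeight (P : Conic Δ) : ℝ := Real.log (height P)

/-- The canonical height `h(P) = lim 2⁻ⁿ h₀(2ⁿ P)`. -/
noncomputable def canHeight (P : Conic Δ) : ℝ :=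
  limUnder atTop (fun n : ℕ => logHeight ((2 ^ n) • P) / 2 ^ n)

end Conic

/-- The integral points form a subgroup of the group of rational points on
the Pell conic `X² - ΔY² = 4` (for an integral `Δ`). -/
def intPoints (Δ : ℤ) : AddSubgroup (Conic (Δ : ℚ)) where
  carrier := {P | ∃ a b : ℤ, P.val = ((a : ℚ), (b : ℚ))}
  zero_mem' := ⟨2, 0, by rw [Conic.zero_val]; norm_num⟩
  neg_mem' := by
    rintro P ⟨a, b, h⟩
    exact ⟨a, -b, by rw [Conic.neg_val, h]; push_cast; rfl⟩
  add_mem' := by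
    rintro P Q ⟨a, b, hP⟩ ⟨c, e, hQ⟩
    have hPp := P.property
    have hQp := Q.property
    unfold PellSol at hPp hQp
    rw [hP] at hPp
    rw [hQ] at hQp
    dsimp only at hPp hQp
    have ha : a ^ 2 - Δ * b ^ 2 = 4 := by exact_mod_cast hPp
    have hc : c ^ 2 - Δ * e ^ 2 = 4 := by exact_mod_cast hQp
    have key : ∀ A B C E F : ZMod 2, A ^ 2 - F * B ^ 2 = 4 → C ^ 2 - F * E ^ 2 = 4 →
        (A * C + F * B * E = 0 ∧ A * E + B * C = 0) := by decide
    have ha2 : (a : ZMod 2) ^ 2 - (Δ : ZMod 2) * (b : ZMod 2) ^ 2 = 4 := by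
      have := congrArg (fun z : ℤ => (z : ZMod 2)) ha
      push_cast at this
      exact_mod_cast this
    have hc2 : (c : ZMod 2) ^ 2 - (Δ : ZMod 2) * (e : ZMod 2) ^ 2 = 4 := by
      have := congrArg (fun z : ℤ => (z : ZMod 2)) hc
      push_cast at this
      exact_mod_cast this
    obtain ⟨k1, k2⟩ := key (a : ZMod 2) (b : ZMod 2) (c : ZMod 2) (e : ZMod 2) (Δ : ZMod 2) ha2 hc2
    have d1 : (2 : ℤ) ∣ (a * c + Δ * b * e) := by
      have : ((a * c + Δ * b * e : ℤ) : ZMod 2) = 0 := by push_cast; linear_combination k1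
      exact_mod_cast (ZMod.intCast_zmod_eq_zero_iff_dvd _ 2).mp this
    have d2 : (2 : ℤ) ∣ (a * e + b * c) := by
      have : ((a * e + b * c : ℤ) : ZMod 2) = 0 := by push_cast; linear_combination k2
      exact_mod_cast (ZMod.intCast_zmod_eq_zero_iff_dvd _ 2).mp this
    obtain ⟨X, hX⟩ := d1
    obtain ⟨Y, hY⟩ := d2
    refine ⟨X, Y, ?_⟩
    rw [Conic.add_val, hP, hQ]
    have hX' : ((a : ℚ) * c + Δ * b * e) = 2 * X := by exact_mod_cast congrArg (fun z : ℤ => (z : ℚ)) hX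
    have hY' : ((a : ℚ) * e + b * c) = 2 * Y := by exact_mod_cast congrArg (fun z : ℤ => (z : ℚ)) hY
    rw [Prod.ext_iff]
    constructor
    · dsimp only
      rw [div_eq_iff (by norm_num : (2:ℚ) ≠ 0)]
      linarith [hX']
    · dsimp only
      rw [div_eq_iff (by norm_num : (2:ℚ) ≠ 0)]
      linarith [hY']

end Extra

section Proof

namespace Conic

variable {Δ : ℚ}

lemma double_x (Q : Conic Δ) : ((2 : ℕ) • Q).val.1 = Q.val.1 ^ 2 - 2 := by
  have hQ := Q.property
  unfold PellSol at hQ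
  rw [two_nsmul, add_val]
  dsimp only
  linear_combination (-(1:ℚ)/2) * hQ

lemma sq_sub_two_num_den (x : ℚ) :
    (x ^ 2 - 2).num = x.num ^ 2 - 2 * (x.den : ℤ) ^ 2 ∧
    ((x ^ 2 - 2).den : ℤ) = (x.den : ℤ) ^ 2 := by
  set r : ℤ := x.num with hr
  set s : ℤ := (x.den : ℤ) with hs
  have hs0 : 0 < s := Int.natCast_pos.mpr x.pos
  have hcop : IsCoprime r s := by
    rw [Int.isCoprime_iff_gcd_eq_one]
    exact x.reduced
  have hcop2 : IsCoprime (r ^ 2 - 2 * s ^ 2) (s ^ 2) := by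
    have h1 : IsCoprime (r ^ 2) (s ^ 2) := (hcop.pow : _)
    have h2 := h1.add_mul_left_left (-2)
    have : r ^ 2 + s ^ 2 * (-2) = r ^ 2 - 2 * s ^ 2 := by ring
    rwa [this] at h2
  have hcopn : Nat.Coprime (r ^ 2 - 2 * s ^ 2).natAbs (s ^ 2).natAbs :=
    Int.isCoprime_iff_gcd_eq_one.mp hcop2
  have hxeq : x ^ 2 - 2 = ((r ^ 2 - 2 * s ^ 2 : ℤ) : ℚ) / ((s ^ 2 : ℤ) : ℚ) := by
    have hx : (r : ℚ) / (s : ℚ) = x := by exact_mod_cast x.num_div_den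
    have hsne : (s : ℚ) ≠ 0 := by exact_mod_cast hs0.ne'
    rw [← hx]
    field_simp
    push_cast
    ring
  constructor
  · rw [hxeq]
    exact Rat.num_div_eq_of_coprime (pow_pos hs0 2) hcopn
  · rw [hxeq]
    exact Rat.den_div_eq_of_coprime (pow_pos hs0 2) hcopn

lemma one_le_height (Q : Conic Δ) : 1 ≤ height Q := by
  unfold height
  have : (1 : ℝ) ≤ (Q.val.1.den : ℝ) := by exact_mod_cast Q.val.1.pos
  exact le_trans this (le_max_right _ _)

lemma height_double_le (Q : Conic Δ) :
    height ((2 : ℕ) • Q) ≤ 4 * height Q ^ 2 ∧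
    height Q ^ 2 ≤ 4 * height ((2 : ℕ) • Q) := by
  obtain ⟨hnum, hden⟩ := sq_sub_two_num_den Q.val.1
  rw [← double_x] at hnum hden
  set x : ℚ := Q.val.1
  set r : ℤ := x.num
  set s : ℤ := (x.den : ℤ) with hsdef
  have hs0 : 0 < s := Int.natCast_pos.mpr x.pos
  have hH2 : height ((2 : ℕ) • Q) = max (|(r : ℝ) ^ 2 - 2 * (s : ℝ) ^ 2|) ((s : ℝ) ^ 2) := by
    have hd' : ((((2 : ℕ) • Q).val.1.den : ℕ) : ℝ) = (s : ℝ) ^ 2 := by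
      have := congrArg (fun z : ℤ => (z : ℝ)) hden
      push_cast at this
      linarith [this]
    unfold height
    rw [hnum, hd']
    push_cast
    rfl
  have hH : height Q = max (|(r : ℝ)|) ((s : ℝ)) := by
    unfold height
    rw [hsdef]
    push_cast
    rfl
  set A : ℝ := |(r : ℝ)| with hA
  set S : ℝ := (s : ℝ) with hS
  set B : ℝ := |(r : ℝ) ^ 2 - 2 * (s : ℝ) ^ 2| with hB
  have hS1 : (1 : ℝ) ≤ S := by
    have h1s : (1 : ℤ) ≤ s := hs0
    rw [hS]
    exact_mod_cast h1s
  have hA0 : 0 ≤ A := abs_nonneg _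
  have hrA : (r : ℝ) ^ 2 = A ^ 2 := (sq_abs _).symm
  have hB1 : (r : ℝ) ^ 2 - 2 * (s : ℝ) ^ 2 ≤ B := le_abs_self _
  have hB2 : -((r : ℝ) ^ 2 - 2 * (s : ℝ) ^ 2) ≤ B := neg_le_abs _
  have hB0 : 0 ≤ B := abs_nonneg _
  rw [hH2, hH]
  have hs2 : (s : ℝ) ^ 2 = S ^ 2 := rfl
  have hBu : B ≤ A ^ 2 + 2 * S ^ 2 := by
    rw [hB]
    rw [abs_le]
    constructor
    · nlinarith
    · nlinarith
  constructor
  · apply max_le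
    · have h1 : A ≤ max A S := le_max_left _ _
      have h2 : S ≤ max A S := le_max_right _ _
      have hm0 : 0 ≤ max A S := le_trans hA0 h1
      nlinarith [mul_le_mul h1 h1 hA0 hm0, mul_le_mul h2 h2 (by linarith : (0:ℝ) ≤ S) hm0]
    · have h2 : S ≤ max A S := le_max_right _ _
      nlinarith
  · rcases le_total A S with h | h
    · rw [max_eq_right h]
      have : S ^ 2 ≤ max B (S ^ 2) := le_max_right _ _
      nlinarith
    · rw [max_eq_left h]
      rcases le_total (A ^ 2) (4 * S ^ 2) with h4 | h4
      · have : S ^ 2 ≤ max B (S ^ 2) := le_max_right _ _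
        nlinarith
      · have : B ≤ max B (S ^ 2) := le_max_left _ _
        nlinarith

lemma logHeight_double (Q : Conic Δ) :
    |logHeight ((2 : ℕ) • Q) - 2 * logHeight Q| ≤ Real.log 4 := by
  obtain ⟨hub, hlb⟩ := height_double_le Q
  have h1 := one_le_height Q
  have h2 := one_le_height ((2 : ℕ) • Q)
  have h1p : (0 : ℝ) < height Q := lt_of_lt_of_le one_pos h1
  have h2p : (0 : ℝ) < height ((2 : ℕ) • Q) := lt_of_lt_of_le one_pos h2
  unfold logHeight
  rw [abs_le]
  constructor
  · have := Real.log_le_log (by positivity) hlb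
    rw [Real.log_mul (by norm_num) h2p.ne', Real.log_pow] at this
    push_cast at this ⊢
    linarith
  · have := Real.log_le_log h2p hub
    rw [Real.log_mul (by norm_num) (by positivity), Real.log_pow] at this
    push_cast at this ⊢
    linarith

end Conic

end Proof


/-- For every rational point `P` on the Pell conic, the sequence
`2⁻ⁿ·h₀(2ⁿP)` is Cauchy, hence the canonical height `h(P)` exists as its limit,
and `|h(P) - h₀(P)| ≤ log 4`. -/
theorem canonical_height_exists (d : ℤ) (hsf : Squarefree d) (hd0 : d ≠ 0) (hd1 : d ≠ 1)
    (Δ : ℤ) (hΔ : Δ = if d % 4 = 1 then d else 4 * d)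
    (P : Conic (Δ : ℚ)) :
    CauchySeq (fun n : ℕ => Conic.logHeight ((2 ^ n) • P) / 2 ^ n) ∧
    ∃ L : ℝ, Filter.Tendsto (fun n : ℕ => Conic.logHeight ((2 ^ n) • P) / 2 ^ n)
        Filter.atTop (nhds L) ∧
      |L - Conic.logHeight P| ≤ Real.log 4 := by
  set f : ℕ → ℝ := fun n => Conic.logHeight ((2 ^ n) • P) / 2 ^ n with hf
  have key : ∀ n : ℕ, dist (f n) (f (n + 1)) ≤ (Real.log 4 / 2) * (1 / 2) ^ n := by
    intro n
    have hsm : (2 ^ (n + 1)) • P = (2 : ℕ) • ((2 ^ n) • P) := by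
      rw [pow_succ, mul_nsmul]
    set Q := (2 ^ n) • P with hQ
    have hb := Conic.logHeight_double Q
    rw [Real.dist_eq, hf]
    dsimp only
    rw [hsm, ← hQ]
    have h2n : (0 : ℝ) < 2 ^ n := by positivity
    have h2n1 : (0 : ℝ) < 2 ^ (n + 1) := by positivity
    have heq : Conic.logHeight Q / 2 ^ n - Conic.logHeight ((2 : ℕ) • Q) / 2 ^ (n + 1)
        = -(Conic.logHeight ((2 : ℕ) • Q) - 2 * Conic.logHeight Q) / 2 ^ (n + 1) := by
      field_simp
      ring
    rw [heq, abs_div, abs_neg, abs_of_pos h2n1]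
    have hrhs : (Real.log 4 / 2) * (1 / 2) ^ n = Real.log 4 / 2 ^ (n + 1) := by
      rw [div_pow, one_pow, pow_succ]
      ring
    rw [hrhs]
    gcongr
  have hC : CauchySeq f := cauchySeq_of_le_geometric (1 / 2) (Real.log 4 / 2) (by norm_num) key
  obtain ⟨L, hL⟩ := cauchySeq_tendsto_of_complete hC
  refine ⟨hC, L, hL, ?_⟩
  have hd := dist_le_of_le_geometric_of_tendsto₀ (1 / 2) (Real.log 4 / 2) (by norm_num) key hL
  have hf0 : f 0 = Conic.logHeight P := by
    simp [hf]
  rw [Real.dist_eq, hf0] at hd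
  have h12 : Real.log 4 / 2 / (1 - 1 / 2) = Real.log 4 := by
    rw [show (1:ℝ) - 1/2 = 1/2 by norm_num]
    ring
  rw [h12] at hd
  rw [abs_sub_comm]
  exact hd
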